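/- arXiv:1501.06393 — 4 statements merged into one kernel-verified Lean document; each statement's English description precedes it below -/
import Mathlib

section
/- For a polynomial map γ(t) = (P(t), Q(t)) with deg P = 3 and deg Q = b, the number of parameter pairs {t,s}, t ≠ s, with P(t) = P(s) and Q(t) = Q(s) is at most b - 1, provided γ is injective on all but finitely many pairs (i.e., the resultant-type system has finitely many solutions). -/
open Polynomial

noncomputable def Hpoly (f : Polynomial ℝ) : ℕ → Polynomial ℝ
  | 0 => 1
  | 1 => Polynomial.X
  | (n+2) => Polynomial.X * Hpoly f (n+1) - f * Hpoly f n

lemma Hpoly_natDegree_le (f : Polynomial ℝ) (hf : f.natDegree ≤ 2) :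
    ∀ n, (Hpoly f n).natDegree ≤ n := by
  intro n
  induction n using Nat.strong_induction_on with
  | _ n ih =>
    match n with
    | 0 => simp [Hpoly]
    | 1 => simp [Hpoly, natDegree_X_le]
    | (n+2) =>
      rw [Hpoly]
      refine le_trans (natDegree_sub_le _ _) (max_le ?_ ?_)
      · refine le_trans natDegree_mul_le ?_
        have h1 := ih (n+1) (by omega)
        have h2 := natDegree_X_le (R := ℝ)
        omega
      · refine le_trans natDegree_mul_le ?_
        have h1 := ih n (by omega)
        omega

lemma Hpoly_eval (f : Polynomial ℝ) (s t : ℝ) (h : s * t = f.eval (s + t)) :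
    ∀ n, (t - s) * (Hpoly f n).eval (s + t) = t ^ (n + 1) - s ^ (n + 1) := by
  intro n
  induction n using Nat.strong_induction_on with
  | _ n ih =>
    match n with
    | 0 => simp [Hpoly]
    | 1 => simp [Hpoly]; ring
    | (n+2) =>
      have ih1 := ih (n+1) (by omega)
      have ih2 := ih n (by omega)
      rw [Hpoly]
      simp only [eval_sub, eval_mul, eval_X]
      rw [← h]
      linear_combination (s + t) * ih1 - (s * t) * ih2

lemma infinite_pairs (F : ℝ → ℝ) (hF : Continuous F) (s₀ m t₀ : ℝ)
    (h1 : s₀ < m) (h2 : m < t₀) (h3 : F s₀ = F t₀) (h4 : F s₀ < F m) :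
    {p : ℝ × ℝ | p.1 < p.2 ∧ F p.1 = F p.2}.Infinite := by
  have key : ∀ y : ℝ, ∃ p : ℝ × ℝ, y ∈ Set.Ioo (F s₀) (F m) →
      (p ∈ {p : ℝ × ℝ | p.1 < p.2 ∧ F p.1 = F p.2} ∧ F p.1 = y) := by
    intro y
    by_cases hy : y ∈ Set.Ioo (F s₀) (F m)
    · have hs : y ∈ F '' Set.Icc s₀ m :=
        intermediate_value_Icc h1.le hF.continuousOn ⟨hy.1.le, hy.2.le⟩
      have ht : y ∈ F '' Set.Icc m t₀ :=
        intermediate_value_Icc' h2.le hF.continuousOn ⟨h3 ▸ hy.1.le, hy.2.le⟩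
      obtain ⟨s', hs', hsy⟩ := hs
      obtain ⟨t', ht', hty⟩ := ht
      have hsm : s' < m := lt_of_le_of_ne hs'.2 (by rintro rfl; exact (ne_of_gt hy.2) hsy)
      have htm : m < t' := lt_of_le_of_ne ht'.1 (by rintro rfl; exact (ne_of_gt hy.2) hty)
      exact ⟨(s', t'), fun _ => ⟨⟨hsm.trans htm, by rw [hsy, hty]⟩, hsy⟩⟩
    · exact ⟨(0,0), fun h => absurd h hy⟩
  choose φ hφ using key
  have hIoo : (Set.Ioo (F s₀) (F m)).Infinite := Set.Ioo_infinite h4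
  refine Set.infinite_of_injOn_mapsTo (f := φ) ?_ (fun y hy => (hφ y hy).1) hIoo
  intro y hy y' hy' h
  have e1 := (hφ y hy).2
  have e2 := (hφ y' hy').2
  rw [← e1, ← e2, h]

/-- For `γ = (P, Q)` with `deg P = 3`, `deg Q = b`, the number of unordered
parameter pairs `{t,s}`, `t ≠ s`, with `P(t) = P(s)` and `Q(t) = Q(s)` is at
most `b - 1`, provided there are only finitely many such pairs. -/
theorem card_double_parameter_pairs_le (P Q : Polynomial ℝ) (b : ℕ)
    (hP : P.natDegree = 3) (hQ : Q.natDegree = b)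
    (hfin : {p : ℝ × ℝ | p.1 < p.2 ∧ P.eval p.1 = P.eval p.2 ∧
      Q.eval p.1 = Q.eval p.2}.Finite) :
    {p : ℝ × ℝ | p.1 < p.2 ∧ P.eval p.1 = P.eval p.2 ∧
      Q.eval p.1 = Q.eval p.2}.ncard ≤ b - 1 := by
  set S := {p : ℝ × ℝ | p.1 < p.2 ∧ P.eval p.1 = P.eval p.2 ∧
      Q.eval p.1 = Q.eval p.2} with hSdef
  have hP0 : P ≠ 0 := by intro h; rw [h] at hP; simp at hP
  have ha : P.coeff 3 ≠ 0 := by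
    have := Polynomial.leadingCoeff_ne_zero.mpr hP0
    rwa [Polynomial.leadingCoeff, hP] at this
  set a := P.coeff 3 with hadef
  set f : Polynomial ℝ := X ^ 2 + C (P.coeff 2 / a) * X + C (P.coeff 1 / a) with hfdef
  have hfdeg : f.natDegree ≤ 2 := by rw [hfdef]; compute_degree
  have keyA : ∀ s t : ℝ, s ≠ t → P.eval s = P.eval t → s * t = f.eval (s + t) := by
    intro s t hst hPst
    have hexp : ∀ x : ℝ, P.eval x = ∑ i ∈ Finset.range (3 + 1), P.coeff i * x ^ i := by
      intro x
      have h := Polynomial.eval_eq_sum_range (p := P) x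
      rwa [hP] at h
    have h4 : P.eval t - P.eval s = 0 := by rw [hPst]; ring
    rw [hexp s, hexp t] at h4
    simp only [Finset.sum_range_succ, Finset.sum_range_zero] at h4
    have hq : a * ((s + t) ^ 2 - s * t) + P.coeff 2 * (s + t) + P.coeff 1 = 0 := by
      have hd : t - s ≠ 0 := sub_ne_zero.mpr (Ne.symm hst)
      apply mul_left_cancel₀ hd
      rw [mul_zero]
      linear_combination h4
    have hev : f.eval (s + t) = (s + t) ^ 2 + (P.coeff 2 / a) * (s + t) + (P.coeff 1 / a) := by
      rw [hfdef]; simp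
    rw [hev]
    field_simp
    linear_combination -hq
  set g : Polynomial ℝ := ∑ k ∈ Finset.range b, C (Q.coeff (k + 1)) * Hpoly f k with hgdef
  have keyB : ∀ s t : ℝ, s * t = f.eval (s + t) →
      (t - s) * g.eval (s + t) = Q.eval t - Q.eval s := by
    intro s t h
    have hexp : ∀ x : ℝ, Q.eval x = ∑ i ∈ Finset.range (b + 1), Q.coeff i * x ^ i := by
      intro x
      have h := Polynomial.eval_eq_sum_range (p := Q) x
      rwa [hQ] at h
    have h1 : (t - s) * g.eval (s + t)
        = ∑ k ∈ Finset.range b, Q.coeff (k + 1) * (t ^ (k + 1) - s ^ (k + 1)) := by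
      rw [hgdef]
      simp only [eval_finset_sum, eval_mul, eval_C, Finset.mul_sum]
      refine Finset.sum_congr rfl (fun k _ => ?_)
      rw [← Hpoly_eval f s t h k]
      ring
    rw [h1, hexp s, hexp t, Finset.sum_range_succ', Finset.sum_range_succ']
    simp only [mul_sub]
    rw [Finset.sum_sub_distrib]
    ring
  by_cases hg : g = 0
  · -- the Q-condition is implied by the P-condition
    have hSeq : S = {p : ℝ × ℝ | p.1 < p.2 ∧ P.eval p.1 = P.eval p.2} := by
      ext ⟨s, t⟩
      constructor
      · rintro ⟨h1, h2, _⟩; exact ⟨h1, h2⟩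
      · rintro ⟨h1, h2⟩
        refine ⟨h1, h2, ?_⟩
        have hA := keyA s t (ne_of_lt h1) h2
        have hB := keyB s t hA
        rw [hg] at hB
        simp only [eval_zero, mul_zero] at hB
        linarith [hB]
    rcases Set.eq_empty_or_nonempty S with hE | ⟨⟨s₀, t₀⟩, hmem⟩
    · simp [hE]
    · exfalso
      obtain ⟨hlt, hPe, _⟩ := hmem
      have hroots : {x : ℝ | (P - C (P.eval s₀)).IsRoot x}.Finite := by
        apply Polynomial.finite_setOf_isRoot
        intro h
        have h3 : (P - C (P.eval s₀)).natDegree = 3 := by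
          rw [Polynomial.natDegree_sub_C, hP]
        rw [h] at h3
        simp at h3
      have hIoo : (Set.Ioo s₀ t₀).Infinite := Set.Ioo_infinite hlt
      obtain ⟨m, hmIoo, hmroot⟩ := (hIoo.diff hroots).nonempty
      have hne : P.eval m ≠ P.eval s₀ := by
        intro h
        exact hmroot (by simp [Polynomial.IsRoot, h])
      have hcont : Continuous fun x : ℝ => P.eval x := P.continuous
      have hinf : {p : ℝ × ℝ | p.1 < p.2 ∧ P.eval p.1 = P.eval p.2}.Infinite := by
        rcases hne.lt_or_gt with h | h
        · have h' := infinite_pairs (fun x => -P.eval x) hcont.neg s₀ m t₀ hmIoo.1 hmIoo.2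
            (by simp [hPe]) (by simpa using h)
          have hset : {p : ℝ × ℝ | p.1 < p.2 ∧ (fun x => -P.eval x) p.1 = (fun x => -P.eval x) p.2}
              = {p : ℝ × ℝ | p.1 < p.2 ∧ P.eval p.1 = P.eval p.2} := by
            ext p; simp [neg_inj]
          rwa [hset] at h'
        · exact infinite_pairs (fun x => P.eval x) hcont s₀ m t₀ hmIoo.1 hmIoo.2 hPe h
      rw [← hSeq] at hinf
      exact hinf hfin
  · -- g ≠ 0 : count roots of g
    have hmaps : ∀ p ∈ S, (p.1 + p.2) ∈ {x : ℝ | g.IsRoot x} := by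
      rintro ⟨s, t⟩ ⟨hlt, hPe, hQe⟩
      have hA := keyA s t (ne_of_lt hlt) hPe
      have hB := keyB s t hA
      have hd : t - s ≠ 0 := sub_ne_zero.mpr (ne_of_gt hlt)
      have h0 : (t - s) * g.eval (s + t) = 0 := by rw [hB, hQe]; ring
      have := (mul_eq_zero.mp h0).resolve_left hd
      simpa [Polynomial.IsRoot] using this
    have hinj : Set.InjOn (fun p : ℝ × ℝ => p.1 + p.2) S := by
      rintro ⟨s, t⟩ ⟨hlt, hPe, _⟩ ⟨s', t'⟩ ⟨hlt', hPe', _⟩ h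
      simp only at h hlt hlt'
      have h1 := keyA s t (ne_of_lt hlt) hPe
      have h2 := keyA s' t' (ne_of_lt hlt') hPe'
      rw [← h] at h2
      have hv : s * t = s' * t' := h1.trans h2.symm
      have hfac : (t' - s) * (t' - t) = 0 := by linear_combination (-t') * h + hv
      rcases mul_eq_zero.mp hfac with h' | h'
      · exfalso
        have e1 : t' = s := by linarith [sub_eq_zero.mp h']
        have e2 : s' = t := by
          have := sub_eq_zero.mp h'
          linarith
        linarith
      · have e1 : t' = t := sub_eq_zero.mp h'
        have e2 : s' = s := by linarith [sub_eq_zero.mp h']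
        simp [Prod.ext_iff, e1, e2]
    have hrootsfin : {x : ℝ | g.IsRoot x}.Finite := Polynomial.finite_setOf_isRoot hg
    have hcount : {x : ℝ | g.IsRoot x}.ncard ≤ b - 1 := by
      have h5 : {x : ℝ | g.IsRoot x} = ↑g.roots.toFinset := by
        ext x
        simp [Polynomial.mem_roots, hg]
      rw [h5, Set.ncard_coe_finset]
      have h6 := Multiset.toFinset_card_le g.roots
      have h7 := Polynomial.card_roots' g
      have h8 : g.natDegree ≤ b - 1 := by
        rw [hgdef]
        apply Polynomial.natDegree_sum_le_of_forall_le
        intro k hk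
        have hH := Hpoly_natDegree_le f hfdeg k
        have hC := Polynomial.natDegree_C_mul_le (Q.coeff (k + 1)) (Hpoly f k)
        have hkb : k < b := Finset.mem_range.mp hk
        omega
      omega
    calc S.ncard ≤ {x : ℝ | g.IsRoot x}.ncard :=
          Set.ncard_le_ncard_of_injOn _ hmaps hinj hrootsfin
      _ ≤ b - 1 := hcount
end

section
/- The plane curve parametrized by x = t³ - 3t, y = t⁵ - 4t³ + 4t has exactly two real double points. -/
/-- The curve `x = t³ - 3t`, `y = t⁵ - 4t³ + 4t` (the diagram `D(0,1,1,0)`)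
has exactly two real double points. -/
theorem double_points_D0110 :
    {p : ℝ × ℝ | p.1 < p.2 ∧
      p.1 ^ 3 - 3 * p.1 = p.2 ^ 3 - 3 * p.2 ∧
      p.1 ^ 5 - 4 * p.1 ^ 3 + 4 * p.1 = p.2 ^ 5 - 4 * p.2 ^ 3 + 4 * p.2}.Finite ∧
    {p : ℝ × ℝ | p.1 < p.2 ∧
      p.1 ^ 3 - 3 * p.1 = p.2 ^ 3 - 3 * p.2 ∧
      p.1 ^ 5 - 4 * p.1 ^ 3 + 4 * p.1 = p.2 ^ 5 - 4 * p.2 ^ 3 + 4 * p.2}.ncard = 2 := by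
  have hr13 : (0:ℝ) ≤ 13 := by norm_num
  set r := Real.sqrt 13 with hr_def
  have hr2 : r ^ 2 = 13 := Real.sq_sqrt hr13
  have hr0 : 0 ≤ r := Real.sqrt_nonneg 13
  have hr3 : 3 < r := by nlinarith
  have hr5 : r < 5 := by nlinarith
  set c := Real.sqrt ((3 + r) / 2) with hc_def
  have hc2 : c ^ 2 = (3 + r) / 2 := Real.sq_sqrt (by linarith)
  have hcpos : 0 < c := Real.sqrt_pos.2 (by linarith)
  set d := Real.sqrt ((15 - 3 * r) / 2) with hd_def
  have hd2 : d ^ 2 = (15 - 3 * r) / 2 := Real.sq_sqrt (by linarith)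
  have hdpos : 0 < d := Real.sqrt_pos.2 (by linarith)
  have hset : {p : ℝ × ℝ | p.1 < p.2 ∧
      p.1 ^ 3 - 3 * p.1 = p.2 ^ 3 - 3 * p.2 ∧
      p.1 ^ 5 - 4 * p.1 ^ 3 + 4 * p.1 = p.2 ^ 5 - 4 * p.2 ^ 3 + 4 * p.2}
      = {((c - d) / 2, (c + d) / 2), ((-c - d) / 2, (-c + d) / 2)} := by
    ext ⟨s, t⟩
    simp only [Set.mem_setOf_eq, Set.mem_insert_iff, Set.mem_singleton_iff, Prod.mk.injEq]
    constructor
    · rintro ⟨hst, hx, hy⟩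
      have hne : 0 < t - s := by linarith
      have e3 : s ^ 2 + s * t + t ^ 2 = 3 := by
        have h0 : (t - s) * (s ^ 2 + s * t + t ^ 2 - 3) = 0 := by linear_combination -hx
        rcases mul_eq_zero.1 h0 with h | h
        · linarith
        · linarith
      have e5 : s ^ 4 + s ^ 3 * t + s ^ 2 * t ^ 2 + s * t ^ 3 + t ^ 4
          - 4 * (s ^ 2 + s * t + t ^ 2) + 4 = 0 := by
        have h0 : (t - s) * (s ^ 4 + s ^ 3 * t + s ^ 2 * t ^ 2 + s * t ^ 3 + t ^ 4
            - 4 * (s ^ 2 + s * t + t ^ 2) + 4) = 0 := by linear_combination -hy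
        rcases mul_eq_zero.1 h0 with h | h
        · linarith
        · linarith
      have hu4 : (s + t) ^ 4 - 3 * (s + t) ^ 2 - 1 = 0 := by
        linear_combination (2 * (s + t) ^ 2 - s * t - 1) * e3 - e5
      have hu2 : (s + t) ^ 2 = (3 + r) / 2 := by
        have hfac : ((s + t) ^ 2 - (3 + r) / 2) * ((s + t) ^ 2 - (3 - r) / 2) = 0 := by
          linear_combination hu4 - (1 / 4) * hr2
        rcases mul_eq_zero.1 hfac with h | h
        · linarith
        · nlinarith [sq_nonneg (s + t)]
      have htd2 : (t - s) ^ 2 = d ^ 2 := by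
        linear_combination 4 * e3 - 3 * hu2 - hd2
      have htd : t - s = d := by
        have h0 : (t - s - d) * (t - s + d) = 0 := by linear_combination htd2
        rcases mul_eq_zero.1 h0 with h | h
        · linarith
        · linarith
      have hcc : (s + t - c) * (s + t + c) = 0 := by linear_combination hu2 - hc2
      rcases mul_eq_zero.1 hcc with h | h
      · left; constructor <;> linarith
      · right; constructor <;> linarith
    · rintro (⟨hs, ht⟩ | ⟨hs, ht⟩) <;> subst hs <;> subst ht <;>
        refine ⟨by linarith, ?_, ?_⟩
      · linear_combination (-3 / 4 * d) * hc2 + (-1 / 4 * d) * hd2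
      · linear_combination (81 / 32 * d - 5 / 32 * d * r - 5 / 8 * d ^ 3
            - 5 / 16 * c ^ 2 * d) * hc2
          + (-13 / 32 * d - 7 / 32 * d * r - 1 / 16 * d ^ 3) * hd2 + (1 / 4 * d) * hr2
      · linear_combination (-3 / 4 * d) * hc2 + (-1 / 4 * d) * hd2
      · linear_combination (81 / 32 * d - 5 / 32 * d * r - 5 / 8 * d ^ 3
            - 5 / 16 * c ^ 2 * d) * hc2
          + (-13 / 32 * d - 7 / 32 * d * r - 1 / 16 * d ^ 3) * hd2 + (1 / 4 * d) * hr2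
  rw [hset]
  have hne2 : ((c - d) / 2, (c + d) / 2) ≠ ((-c - d) / 2, (-c + d) / 2) := by
    intro h
    have h1 : (c - d) / 2 = (-c - d) / 2 := congrArg Prod.fst h
    have : c = -c := by linarith
    linarith
  exact ⟨(Set.finite_singleton _).insert _, Set.ncard_pair hne2⟩
end

section
/- The plane curve parametrized by x = t³ - 3t, y = t⁴ - 2t² - 2t - 2 has exactly two real double points. -/
noncomputable def gD02 (p : ℝ) : ℝ × ℝ :=
  ((p - Real.sqrt (12 - 3 * p ^ 2)) / 2, (p + Real.sqrt (12 - 3 * p ^ 2)) / 2)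

def SD02 : Set ℝ := {p | p ^ 3 - 4 * p + 2 = 0 ∧ -2 < p ∧ p < 2}

lemma gD02_inj : Function.Injective gD02 := by
  intro p q h
  have h1 := congrArg (fun x : ℝ × ℝ => x.1 + x.2) h
  simp only [gD02] at h1
  linarith

lemma sum_zero_D02 {x y z : ℝ} (hx : x ^ 3 - 4 * x + 2 = 0) (hy : y ^ 3 - 4 * y + 2 = 0)
    (hz : z ^ 3 - 4 * z + 2 = 0) (hxy : x ≠ y) (hxz : x ≠ z) (hyz : y ≠ z) :
    x + y + z = 0 := by
  have h1 : x ^ 2 + x * y + y ^ 2 = 4 := by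
    have h : (x - y) * (x ^ 2 + x * y + y ^ 2 - 4) = 0 := by linear_combination hx - hy
    rcases mul_eq_zero.1 h with h | h
    · exact absurd (sub_eq_zero.1 h) hxy
    · linarith
  have h2 : x ^ 2 + x * z + z ^ 2 = 4 := by
    have h : (x - z) * (x ^ 2 + x * z + z ^ 2 - 4) = 0 := by linear_combination hx - hz
    rcases mul_eq_zero.1 h with h | h
    · exact absurd (sub_eq_zero.1 h) hxz
    · linarith
  have h3 : (y - z) * (x + y + z) = 0 := by linear_combination h1 - h2
  rcases mul_eq_zero.1 h3 with h | h
  · exact absurd (sub_eq_zero.1 h) hyz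
  · exact h

lemma curve_eq_image_D02 :
    {p : ℝ × ℝ | p.1 < p.2 ∧
      p.1 ^ 3 - 3 * p.1 = p.2 ^ 3 - 3 * p.2 ∧
      p.1 ^ 4 - 2 * p.1 ^ 2 - 2 * p.1 - 2 = p.2 ^ 4 - 2 * p.2 ^ 2 - 2 * p.2 - 2}
    = gD02 '' SD02 := by
  ext ⟨s, t⟩
  simp only [Set.mem_setOf_eq, Set.mem_image]
  constructor
  · rintro ⟨hst, h1, h2⟩
    have hne : t - s ≠ 0 := by
      have : 0 < t - s := sub_pos.2 hst
      linarith
    have h3 : s ^ 2 + s * t + t ^ 2 = 3 := by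
      have h : (t - s) * (s ^ 2 + s * t + t ^ 2 - 3) = 0 := by linear_combination -h1
      rcases mul_eq_zero.1 h with h | h
      · exact absurd h hne
      · linarith
    have h4 : (s + t) * (s ^ 2 + t ^ 2) - 2 * (s + t) - 2 = 0 := by
      have h : (t - s) * ((s + t) * (s ^ 2 + t ^ 2) - 2 * (s + t) - 2) = 0 := by
        linear_combination -h2
      rcases mul_eq_zero.1 h with h | h
      · exact absurd h hne
      · linarith
    have hcub : (s + t) ^ 3 - 4 * (s + t) + 2 = 0 := by
      linear_combination (-1 : ℝ) * h4 + (2 * (s + t)) * h3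
    have hdiff : 12 - 3 * (s + t) ^ 2 = (t - s) ^ 2 := by linear_combination (-4 : ℝ) * h3
    have hb : (s + t) ^ 2 < 4 := by
      have hpos : 0 < (t - s) ^ 2 := by positivity
      nlinarith
    refine ⟨s + t, ⟨hcub, by nlinarith, by nlinarith⟩, ?_⟩
    have hsq : Real.sqrt (12 - 3 * (s + t) ^ 2) = t - s := by
      rw [hdiff]
      exact Real.sqrt_sq (by linarith)
    simp only [gD02, hsq, Prod.mk.injEq]
    constructor <;> ring
  · rintro ⟨p, ⟨hcub, hl, hr⟩, hgp⟩
    have hd : 0 < 12 - 3 * p ^ 2 := by nlinarith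
    set r := Real.sqrt (12 - 3 * p ^ 2) with hrdef
    have hr2 : r ^ 2 = 12 - 3 * p ^ 2 := Real.sq_sqrt hd.le
    have hrpos : 0 < r := Real.sqrt_pos.2 hd
    simp only [gD02, Prod.mk.injEq, ← hrdef] at hgp
    obtain ⟨hs, ht⟩ := hgp
    subst hs ht
    refine ⟨by linarith, ?_, ?_⟩
    · linear_combination (-r / 4) * hr2
    · linear_combination (-p * r / 2) * hr2 + r * hcub

/-- The curve `x = t³ - 3t`, `y = t⁴ - 2t² - 2t - 2` (the diagram `D(0,2)`)
has exactly two real double points. -/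
theorem double_points_D02 :
    {p : ℝ × ℝ | p.1 < p.2 ∧
      p.1 ^ 3 - 3 * p.1 = p.2 ^ 3 - 3 * p.2 ∧
      p.1 ^ 4 - 2 * p.1 ^ 2 - 2 * p.1 - 2 = p.2 ^ 4 - 2 * p.2 ^ 2 - 2 * p.2 - 2}.Finite ∧
    {p : ℝ × ℝ | p.1 < p.2 ∧
      p.1 ^ 3 - 3 * p.1 = p.2 ^ 3 - 3 * p.2 ∧
      p.1 ^ 4 - 2 * p.1 ^ 2 - 2 * p.1 - 2 = p.2 ^ 4 - 2 * p.2 ^ 2 - 2 * p.2 - 2}.ncard = 2 := by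
  have cont : ∀ u v : ℝ, ContinuousOn (fun x : ℝ => x ^ 3 - 4 * x + 2) (Set.Icc u v) := by
    intro u v
    fun_prop
  obtain ⟨a, ha, ha0⟩ := intermediate_value_Ioo' (by norm_num : (0:ℝ) ≤ 1) (cont 0 1)
    (by norm_num : (0:ℝ) ∈ Set.Ioo ((fun x : ℝ => x ^ 3 - 4 * x + 2) 1)
      ((fun x : ℝ => x ^ 3 - 4 * x + 2) 0))
  obtain ⟨b, hb, hb0⟩ := intermediate_value_Ioo (by norm_num : (1:ℝ) ≤ 2) (cont 1 2)
    (by norm_num : (0:ℝ) ∈ Set.Ioo ((fun x : ℝ => x ^ 3 - 4 * x + 2) 1)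
      ((fun x : ℝ => x ^ 3 - 4 * x + 2) 2))
  obtain ⟨c, hc, hc0⟩ := intermediate_value_Ioo (by norm_num : (-3:ℝ) ≤ -2) (cont (-3) (-2))
    (by norm_num : (0:ℝ) ∈ Set.Ioo ((fun x : ℝ => x ^ 3 - 4 * x + 2) (-3))
      ((fun x : ℝ => x ^ 3 - 4 * x + 2) (-2)))
  simp only at ha0 hb0 hc0
  obtain ⟨ha1, ha2⟩ := ha
  obtain ⟨hb1, hb2⟩ := hb
  obtain ⟨hc1, hc2⟩ := hc
  have hab : a ≠ b := by linarith
  have hS : SD02 = {a, b} := by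
    ext p
    constructor
    · rintro ⟨hp0, hpl, hpr⟩
      by_contra hcon
      rw [Set.mem_insert_iff, Set.mem_singleton_iff] at hcon
      push_neg at hcon
      obtain ⟨hpa, hpb⟩ := hcon
      have hpc : p ≠ c := by intro h; rw [h] at hpl; linarith
      have hac : a ≠ c := by intro h; rw [h] at ha1; linarith
      have hbc : b ≠ c := by intro h; rw [h] at hb1; linarith
      have s1 := sum_zero_D02 hp0 ha0 hc0 hpa hpc hac
      have s2 := sum_zero_D02 hp0 hb0 hc0 hpb hpc hbc
      have : a = b := by linarith
      exact hab this
    · rintro (rfl | rfl)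
      · exact ⟨ha0, by linarith, by linarith⟩
      · exact ⟨hb0, by linarith, by linarith⟩
  rw [curve_eq_image_D02, hS]
  constructor
  · exact (Set.finite_singleton b |>.insert a).image _
  · rw [Set.ncard_image_of_injective _ gD02_inj]
    exact Set.ncard_pair hab
end

section
/- The curve parametrized by (T_3(t), T_5(t)) has exactly four real double points. -/
open Polynomial Polynomial.Chebyshev

private lemma evalT3 (x : ℝ) : (T ℝ 3).eval x = 4*x^3 - 3*x := by
  have e3 : T ℝ 3 = 2*X*(T ℝ 2) - T ℝ 1 := by simpa using T_add_two ℝ 1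
  rw [e3, T_two, T_one]; simp; ring

private lemma evalT5 (x : ℝ) : (T ℝ 5).eval x = 16*x^5 - 20*x^3 + 5*x := by
  have e3 : T ℝ 3 = 2*X*(T ℝ 2) - T ℝ 1 := by simpa using T_add_two ℝ 1
  have e4 : T ℝ 4 = 2*X*(T ℝ 3) - T ℝ 2 := by simpa using T_add_two ℝ 2
  have e5 : T ℝ 5 = 2*X*(T ℝ 4) - T ℝ 3 := by simpa using T_add_two ℝ 3
  rw [e5, e4, e3, T_two, T_one]; simp; ring

private lemma memb (u r : ℝ) (hr : 0 < r) (h1 : 3*u^2 + r^2 = 3)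
    (h2 : 16*u^4 - 12*u^2 + 1 = 0) :
    (u-r)/2 < (u+r)/2 ∧ (T ℝ 3).eval ((u-r)/2) = (T ℝ 3).eval ((u+r)/2) ∧
      (T ℝ 5).eval ((u-r)/2) = (T ℝ 5).eval ((u+r)/2) := by
  refine ⟨by linarith, ?_, ?_⟩
  · rw [evalT3, evalT3]; linear_combination (-r)*h1
  · rw [evalT5, evalT5]; linear_combination (-r*(r^2+7*u^2-2))*h1 + r*h2

private lemma back (s t u rr : ℝ) (hst : s < t) (hu : s + t = u)
    (h1 : 3*(s+t)^2 + (t-s)^2 = 3) (hrr : rr^2 = 3 - 3*u^2) (hpos : 0 ≤ rr) :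
    s = (u-rr)/2 ∧ t = (u+rr)/2 := by
  have hsq : (t-s)^2 = rr^2 := by
    linear_combination h1 - hrr - 3*(s+t+u)*hu
  have h0 : (t - s - rr) * (t - s + rr) = 0 := by linear_combination hsq
  have hts : t - s = rr := by
    rcases mul_eq_zero.1 h0 with h | h
    · linarith
    · nlinarith
  constructor <;> linarith

set_option maxHeartbeats 2000000 in
/-- The Chebyshev curve `(T₃(t), T₅(t))` (the figure-eight diagram
`D(1,1,1,1)`) has exactly four real double points. -/
theorem double_points_T3_T5 :
    {p : ℝ × ℝ | p.1 < p.2 ∧ (T ℝ 3).eval p.1 = (T ℝ 3).eval p.2 ∧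
      (T ℝ 5).eval p.1 = (T ℝ 5).eval p.2}.Finite ∧
    {p : ℝ × ℝ | p.1 < p.2 ∧ (T ℝ 3).eval p.1 = (T ℝ 3).eval p.2 ∧
      (T ℝ 5).eval p.1 = (T ℝ 5).eval p.2}.ncard = 4 := by
  have ha : (Real.sqrt 5)^2 = 5 := Real.sq_sqrt (by norm_num)
  set a := Real.sqrt 5 with ha_def
  have ha2 : 2 < a := by nlinarith [Real.sqrt_nonneg 5]
  have ha3 : a < 3 := by nlinarith [Real.sqrt_nonneg 5]
  have h158 : (0:ℝ) < (15 - 3*a)/8 := by linarith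
  have h158' : (0:ℝ) < (15 + 3*a)/8 := by linarith
  set r1 := Real.sqrt ((15 - 3*a)/8) with hr1_def
  set r2 := Real.sqrt ((15 + 3*a)/8) with hr2_def
  have hr1 : r1^2 = (15 - 3*a)/8 := Real.sq_sqrt (le_of_lt h158)
  have hr2 : r2^2 = (15 + 3*a)/8 := Real.sq_sqrt (le_of_lt h158')
  have hr1p : 0 < r1 := Real.sqrt_pos.2 h158
  have hr2p : 0 < r2 := Real.sqrt_pos.2 h158'
  -- bounds
  have hr1lb : (3:ℝ)/4 ≤ r1 := by nlinarith
  have hr1ub : r1 < 5/4 := by nlinarith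
  have hr12 : r1 < r2 := by nlinarith
  have hBC : r2 < a/2 + r1 := by nlinarith [mul_nonneg (by linarith : (0:ℝ) ≤ a - 2) (by linarith : (0:ℝ) ≤ r1 - 3/4)]
  have hBD : r1 + 1/2 < r2 := by nlinarith
  -- h1/h2 instances
  have h1A : 3*((1+a)/4)^2 + r1^2 = 3 := by linear_combination hr1 + (3/16)*ha
  have h2A : 16*((1+a)/4)^4 - 12*((1+a)/4)^2 + 1 = 0 := by
    linear_combination ((a^2+4*a-1)/16)*ha
  have h1B : 3*(-(1+a)/4)^2 + r1^2 = 3 := by linear_combination hr1 + (3/16)*ha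
  have h2B : 16*(-(1+a)/4)^4 - 12*(-(1+a)/4)^2 + 1 = 0 := by
    linear_combination ((a^2+4*a-1)/16)*ha
  have h1C : 3*((a-1)/4)^2 + r2^2 = 3 := by linear_combination hr2 + (3/16)*ha
  have h2C : 16*((a-1)/4)^4 - 12*((a-1)/4)^2 + 1 = 0 := by
    linear_combination ((a^2-4*a-1)/16)*ha
  have h1D : 3*(-(a-1)/4)^2 + r2^2 = 3 := by linear_combination hr2 + (3/16)*ha
  have h2D : 16*(-(a-1)/4)^4 - 12*(-(a-1)/4)^2 + 1 = 0 := by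
    linear_combination ((a^2-4*a-1)/16)*ha
  have key : {p : ℝ × ℝ | p.1 < p.2 ∧ (T ℝ 3).eval p.1 = (T ℝ 3).eval p.2 ∧
      (T ℝ 5).eval p.1 = (T ℝ 5).eval p.2} =
      ({(((1+a)/4 - r1)/2, ((1+a)/4 + r1)/2),
        ((-(1+a)/4 - r1)/2, (-(1+a)/4 + r1)/2),
        (((a-1)/4 - r2)/2, ((a-1)/4 + r2)/2),
        ((-(a-1)/4 - r2)/2, (-(a-1)/4 + r2)/2)} : Set (ℝ × ℝ)) := by
    ext ⟨s, t⟩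
    simp only [Set.mem_setOf_eq, Set.mem_insert_iff, Set.mem_singleton_iff, Prod.mk.injEq]
    constructor
    · rintro ⟨hlt, h3, h5⟩
      rw [evalT3, evalT3] at h3
      rw [evalT5, evalT5] at h5
      have hst : t - s ≠ 0 := sub_ne_zero.2 (ne_of_gt hlt)
      have h1 : 3*(s+t)^2 + (t-s)^2 = 3 := by
        refine mul_left_cancel₀ hst ?_
        linear_combination -h3
      have h2 : 16*(s+t)^4 - 12*(s+t)^2 + 1 = 0 := by
        refine mul_left_cancel₀ hst ?_
        linear_combination ((t-s)*((t-s)^2+7*(s+t)^2-2))*h1 + h5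
      have hu4 : ((s+t)^2 - (3+a)/8) * ((s+t)^2 - (3-a)/8) = 0 := by
        linear_combination (1/16)*h2 - (1/64)*ha
      rcases mul_eq_zero.1 hu4 with h | h
      · have hfac : (s+t - (1+a)/4) * (s+t + (1+a)/4) = 0 := by
          linear_combination h - (1/16)*ha
        have hrrA : r1^2 = 3 - 3*((1+a)/4)^2 := by linear_combination hr1 + (3/16)*ha
        have hrrB : r1^2 = 3 - 3*(-(1+a)/4)^2 := by linear_combination hr1 + (3/16)*ha
        rcases mul_eq_zero.1 hfac with h' | h'
        · obtain ⟨hs, ht⟩ := back s t ((1+a)/4) r1 hlt (by linarith) h1 hrrA (le_of_lt hr1p)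
          exact Or.inl ⟨hs, ht⟩
        · obtain ⟨hs, ht⟩ := back s t (-(1+a)/4) r1 hlt (by linarith) h1 hrrB (le_of_lt hr1p)
          exact Or.inr (Or.inl ⟨hs, ht⟩)
      · have hfac : (s+t - (a-1)/4) * (s+t + (a-1)/4) = 0 := by
          linear_combination h - (1/16)*ha
        have hrrC : r2^2 = 3 - 3*((a-1)/4)^2 := by linear_combination hr2 + (3/16)*ha
        have hrrD : r2^2 = 3 - 3*(-(a-1)/4)^2 := by linear_combination hr2 + (3/16)*ha
        rcases mul_eq_zero.1 hfac with h' | h'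
        · obtain ⟨hs, ht⟩ := back s t ((a-1)/4) r2 hlt (by linarith) h1 hrrC (le_of_lt hr2p)
          exact Or.inr (Or.inr (Or.inl ⟨hs, ht⟩))
        · obtain ⟨hs, ht⟩ := back s t (-(a-1)/4) r2 hlt (by linarith) h1 hrrD (le_of_lt hr2p)
          exact Or.inr (Or.inr (Or.inr ⟨hs, ht⟩))
    · rintro (⟨hs, ht⟩ | ⟨hs, ht⟩ | ⟨hs, ht⟩ | ⟨hs, ht⟩) <;> subst hs <;> subst ht
      · exact memb _ _ hr1p h1A h2A
      · exact memb _ _ hr1p h1B h2B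
      · exact memb _ _ hr2p h1C h2C
      · exact memb _ _ hr2p h1D h2D
  rw [key]
  constructor
  · exact (((Set.finite_singleton _).insert _).insert _).insert _
  · have nAB : (((1+a)/4 - r1)/2 : ℝ) ≠ ((-(1+a)/4 - r1)/2) := by
      intro h; linarith
    have nAC : (((1+a)/4 - r1)/2 : ℝ) ≠ (((a-1)/4 - r2)/2) := by
      intro h; linarith
    have nAD : (((1+a)/4 - r1)/2 : ℝ) ≠ ((-(a-1)/4 - r2)/2) := by
      intro h; linarith
    have nBC : ((-(1+a)/4 - r1)/2 : ℝ) ≠ (((a-1)/4 - r2)/2) := by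
      intro h; linarith
    have nBD : ((-(1+a)/4 - r1)/2 : ℝ) ≠ ((-(a-1)/4 - r2)/2) := by
      intro h; linarith
    have nCD : (((a-1)/4 - r2)/2 : ℝ) ≠ ((-(a-1)/4 - r2)/2) := by
      intro h; linarith
    rw [Set.ncard_insert_of_notMem, Set.ncard_insert_of_notMem,
        Set.ncard_insert_of_notMem, Set.ncard_singleton]
    · simp only [Set.mem_singleton_iff, Prod.mk.injEq, not_and]
      intro h; exact absurd h nCD
    · simp only [Set.mem_insert_iff, Set.mem_singleton_iff, Prod.mk.injEq, not_or]
      exact ⟨fun h => absurd h.1 nBC, fun h => absurd h.1 nBD⟩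
    · simp only [Set.mem_insert_iff, Set.mem_singleton_iff, Prod.mk.injEq, not_or]
      exact ⟨fun h => absurd h.1 nAB, fun h => absurd h.1 nAC, fun h => absurd h.1 nAD⟩
end
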